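/- arXiv:1811.11246 — 4 statements merged into one kernel-verified Lean document; each statement's English description precedes it below -/
import Mathlib

section
/- Let $q \in (0,1)$ and $v > 0$. Then for every integer $k \ge 0$, $\sum_{m=1}^{k+1} q^{k+1-m} m^{-v} \le q^{k+1} \cdot \frac{e^{2v} q^{-1} - 1}{1 - q} + \frac{2 q^{-1} (k+1)^{-v}}{\ln(1/q)}$. -/
/-!
Split the sum at `M = ⌊1 + 2v / log q⁻¹⌋`. For `m ≤ M` bound `m^(-v)` by `1` and sum the geometric
series, using `q^(-M) ≤ e^(2v) q⁻¹`. For `m > M` we have `v / m ≤ (log q⁻¹) / 2`, so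
`log (N / m) ≤ (N - m) / m` gives `q^(N-m) m^(-v) ≤ (√q)^(N-m) N^(-v)`, and the geometric series in
`√q` is at most `(1 - √q)⁻¹ ≤ 2 q⁻¹ / log q⁻¹`.
-/

open Finset Real

section

variable {q : ℝ}

lemma sum_Icc_one_inv_pow (hq0 : q ≠ 0) (hq1 : q ≠ 1) (M : ℕ) :
    ∑ m ∈ Icc 1 M, q⁻¹ ^ m = (q⁻¹ ^ M - 1) / (1 - q) := by
  have hq1' : q⁻¹ ≠ 1 := by simpa using hq1
  rw [← Ico_add_one_right_eq_Icc, geom_sum_Ico hq1' (by omega)]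
  have hden : q⁻¹ - 1 = q⁻¹ * (1 - q) := by field_simp
  rw [pow_succ', pow_one, ← mul_sub_one, hden, mul_div_mul_left _ _ (inv_ne_zero hq0)]

lemma inv_pow_le_exp_mul_inv (hq : 0 < q) {M : ℕ} {t : ℝ}
    (hM : M * log q⁻¹ ≤ t + log q⁻¹) : q⁻¹ ^ M ≤ exp t * q⁻¹ := by
  have hq' : 0 < q⁻¹ := inv_pos.2 hq
  calc q⁻¹ ^ M = exp (M * log q⁻¹) := by rw [exp_nat_mul, exp_log hq']
    _ ≤ exp (t + log q⁻¹) := exp_le_exp.2 hM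
    _ = exp t * q⁻¹ := by rw [exp_add, exp_log hq']

lemma mul_log_inv_le_two_mul_one_sub_sqrt (hq : 0 < q) : q * log q⁻¹ ≤ 2 * (1 - √q) := by
  set s := √q
  have hs : 0 < s := sqrt_pos.2 hq
  have hsq : s ^ 2 = q := sq_sqrt hq.le
  have hlog : log s⁻¹ ≤ s⁻¹ - 1 := log_le_sub_one_of_pos (inv_pos.2 hs)
  calc q * log q⁻¹ = 2 * s ^ 2 * log s⁻¹ := by rw [← hsq, ← inv_pow, log_pow]; push_cast; ring
    _ ≤ 2 * s ^ 2 * (s⁻¹ - 1) := by gcongr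
    _ = 2 * (s - s ^ 2) := by field_simp
    _ ≤ 2 * (1 - s) := by nlinarith [sq_nonneg (s - 1)]

lemma sum_Icc_pow_sub_le {s : ℝ} (hs0 : 0 ≤ s) (hs1 : s < 1) (N : ℕ) :
    ∑ m ∈ Icc 1 N, s ^ (N - m) ≤ (1 - s)⁻¹ := by
  rw [← Ico_add_one_right_eq_Icc, sum_Ico_reflect _ _ le_rfl, Nat.add_sub_cancel,
    Nat.sub_self, ← range_eq_Ico]
  simpa using geom_sum_Ico_le_of_lt_one (m := 0) (n := N) hs0 hs1

lemma mul_log_div_le {v L m N : ℝ} (hv : 0 ≤ v) (hm : 0 < m) (hmN : m ≤ N)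
    (h : 2 * v ≤ m * L) : v * log (N / m) ≤ (N - m) * L / 2 := by
  have hvm : v / m ≤ L / 2 := by rw [div_le_iff₀ hm]; linarith
  calc v * log (N / m) ≤ v * ((N - m) / m) := by
        gcongr
        rw [sub_div, div_self hm.ne']
        exact log_le_sub_one_of_pos (div_pos (hm.trans_le hmN) hm)
    _ = v / m * (N - m) := by ring
    _ ≤ L / 2 * (N - m) := by gcongr
    _ = (N - m) * L / 2 := by ring

lemma pow_sub_mul_rpow_neg_le (hq : 0 < q) {v : ℝ} (hv : 0 ≤ v) {m N : ℕ} (hm : 0 < m)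
    (hmN : m ≤ N) (h : 2 * v ≤ m * log q⁻¹) :
    q ^ (N - m) * (m : ℝ) ^ (-v) ≤ √q ^ (N - m) * (N : ℝ) ^ (-v) := by
  have hm' : (0 : ℝ) < m := by exact_mod_cast hm
  have hmN' : (m : ℝ) ≤ N := by exact_mod_cast hmN
  have hN' : (0 : ℝ) < N := hm'.trans_le hmN'
  have key := mul_log_div_le hv hm' hmN' h
  rw [log_div hN'.ne' hm'.ne', log_inv] at key
  rw [← exp_log (pow_pos hq _), ← exp_log (pow_pos (sqrt_pos.2 hq) _), rpow_def_of_pos hm',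
    rpow_def_of_pos hN', ← exp_add, ← exp_add, exp_le_exp, log_pow, log_pow, log_sqrt hq.le,
    Nat.cast_sub hmN]
  linarith

lemma sum_filter_le_pow_sub_mul_rpow_neg_le (hq0 : 0 < q) (hq1 : q ≠ 1) {v : ℝ} (hv : 0 ≤ v)
    (N M : ℕ) :
    ∑ m ∈ Icc 1 N with m ≤ M, q ^ (N - m) * (m : ℝ) ^ (-v) ≤ q ^ N * (q⁻¹ ^ M - 1) / (1 - q) :=
  calc ∑ m ∈ Icc 1 N with m ≤ M, q ^ (N - m) * (m : ℝ) ^ (-v)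
      ≤ ∑ m ∈ Icc 1 N with m ≤ M, q ^ N * q⁻¹ ^ m := by
        refine sum_le_sum fun m hm => ?_
        simp only [mem_filter, mem_Icc] at hm
        rw [inv_pow, ← pow_sub₀ _ hq0.ne' hm.1.2]
        refine mul_le_of_le_one_right (by positivity) ?_
        exact rpow_le_one_of_one_le_of_nonpos (by exact_mod_cast hm.1.1) (by linarith)
    _ ≤ ∑ m ∈ Icc 1 M, q ^ N * q⁻¹ ^ m := by
        refine sum_le_sum_of_subset_of_nonneg (fun m hm => ?_) fun _ _ _ => by positivity
        simp only [mem_filter, mem_Icc] at hm ⊢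
        exact ⟨hm.1.1, hm.2⟩
    _ = q ^ N * (q⁻¹ ^ M - 1) / (1 - q) := by
        rw [← mul_sum, sum_Icc_one_inv_pow hq0.ne' hq1, mul_div_assoc]

lemma sum_filter_not_le_pow_sub_mul_rpow_neg_le (hq0 : 0 < q) (hq1 : q < 1) {v : ℝ} (hv : 0 ≤ v)
    {M : ℕ} (hM : ∀ m : ℕ, M < m → 2 * v ≤ m * log q⁻¹) (N : ℕ) :
    ∑ m ∈ Icc 1 N with ¬ m ≤ M, q ^ (N - m) * (m : ℝ) ^ (-v) ≤
      2 * q⁻¹ * (N : ℝ) ^ (-v) / log q⁻¹ := by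
  have hL : 0 < log q⁻¹ := log_pos (one_lt_inv₀ hq0 |>.2 hq1)
  have hs : √q < 1 := (sqrt_lt_sqrt hq0.le hq1).trans_eq sqrt_one
  calc ∑ m ∈ Icc 1 N with ¬ m ≤ M, q ^ (N - m) * (m : ℝ) ^ (-v)
      ≤ ∑ m ∈ Icc 1 N, √q ^ (N - m) * (N : ℝ) ^ (-v) := by
        refine (sum_le_sum fun m hm => ?_).trans
          (sum_le_sum_of_subset_of_nonneg (filter_subset _ _) fun _ _ _ => by positivity)
        simp only [mem_filter, mem_Icc, not_le] at hm
        exact pow_sub_mul_rpow_neg_le hq0 hv hm.1.1 hm.1.2 (hM m hm.2)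
    _ ≤ (1 - √q)⁻¹ * (N : ℝ) ^ (-v) := by
        rw [← sum_mul]
        gcongr
        exact sum_Icc_pow_sub_le (sqrt_nonneg q) hs N
    _ ≤ 2 * q⁻¹ / log q⁻¹ * (N : ℝ) ^ (-v) := by
        gcongr
        have key := mul_log_inv_le_two_mul_one_sub_sqrt hq0
        rw [← le_div_iff₀' hq0] at key
        rw [le_div_iff₀ hL, inv_mul_le_iff₀ (sub_pos.2 hs)]
        exact key.trans_eq (by ring)
    _ = 2 * q⁻¹ * (N : ℝ) ^ (-v) / log q⁻¹ := by ring

end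

theorem stmt_7 (q v : ℝ) (hq0 : 0 < q) (hq1 : q < 1) (hv : 0 < v) :
    ∀ k : ℕ,
      ∑ m ∈ Finset.Icc 1 (k + 1), q ^ (k + 1 - m) * (m : ℝ) ^ (-v) ≤
        q ^ (k + 1) * (Real.exp (2 * v) * q⁻¹ - 1) / (1 - q) +
          2 * q⁻¹ * ((k : ℝ) + 1) ^ (-v) / Real.log (1 / q) := by
  intro k
  have hL : 0 < log q⁻¹ := log_pos (one_lt_inv₀ hq0 |>.2 hq1)
  set M := ⌊1 + 2 * v / log q⁻¹⌋₊
  have hM_le : M * log q⁻¹ ≤ 2 * v + log q⁻¹ := by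
    calc M * log q⁻¹ ≤ (1 + 2 * v / log q⁻¹) * log q⁻¹ := by
          gcongr
          exact Nat.floor_le (by positivity)
      _ = 2 * v + log q⁻¹ := by rw [add_mul, one_mul, div_mul_cancel₀ _ hL.ne', add_comm]
  have hM_lt (m : ℕ) (hm : M < m) : 2 * v ≤ m * log q⁻¹ := by
    have hfloor := Nat.lt_floor_add_one (1 + 2 * v / log q⁻¹)
    have hm' : (M : ℝ) + 1 ≤ m := by exact_mod_cast hm
    rw [← div_le_iff₀ hL]
    linarith
  rw [← sum_filter_add_sum_filter_not _ (· ≤ M), one_div,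
    show (k : ℝ) + 1 = ((k + 1 : ℕ) : ℝ) by push_cast; rfl]
  gcongr ?_ + ?_
  · refine (sum_filter_le_pow_sub_mul_rpow_neg_le hq0 hq1.ne hv.le _ _).trans ?_
    have h1q : 0 < 1 - q := sub_pos.2 hq1
    gcongr
    exact inv_pow_le_exp_mul_inv hq0 hM_le
  · exact sum_filter_not_le_pow_sub_mul_rpow_neg_le hq0 hq1 hv.le hM_lt _
end

section
/- Let $\beta \in (0,1)$, $u \in (0,1]$, and $\tau_p = \lceil (p+1)^u \rceil$. Then for every integer $k \ge 1$, $\sum_{s=1}^{k} \beta^{\sum_{p=s}^{k} \tau_p} \le e \left(\ln(\beta^{-1/(u+1)})\right)^{-1/(u+1)} \beta^{(k+1)^{u+1}/(u+1)} + \beta^{((k+1)^{u+1} - k^{u+1})/(u+1)} \left(1 + \frac{u+1}{k^u \ln(1/\beta)}\right)$. -/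
/-!
Put `c = log (1/β) / (u + 1)`, so that `β ^ x = exp (-(u + 1) c x)`. Since
`(p+1)^(u+1) - p^(u+1) ≤ (u+1) (p+1)^u ≤ (u+1) τ_p`, the exponent telescopes to
`∑_{p=s}^k τ_p ≥ ((k+1)^(u+1) - s^(u+1)) / (u+1)`, and the sum is at most
`exp (-c (k+1)^(u+1)) ∑_{s=1}^k f s` with `f x = exp (c x^(u+1))`. As `f` is increasing, the
sum is at most `f k + ∫_0^k f`. With `a = c^(-1/(u+1))` we have `f ≤ e` on `[0, a]`, while on
`[a, k]` the integrand is dominated by the derivative of `f x / (c x^u)`, because there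
`c x^(u+1) ≥ 1`.
-/

open Real Finset

lemma rpow_add_one_sub_rpow_add_one_le {u x b : ℝ} (hu : 0 ≤ u) (hx : 0 ≤ x) (hxb : x ≤ b) :
    b ^ (u + 1) - x ^ (u + 1) ≤ (u + 1) * b ^ u * (b - x) := by
  obtain rfl | hb := (hx.trans hxb).eq_or_lt
  · simp [le_antisymm hxb hx]
  have hbu : 0 < b ^ (u + 1) := rpow_pos_of_pos hb _
  -- Bernoulli's inequality for `(x / b) ^ (u + 1) = (1 + (x / b - 1)) ^ (u + 1)`
  have hber := one_add_mul_self_le_rpow_one_add (s := x / b - 1)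
    (by linarith [div_nonneg hx hb.le]) (by linarith : (1 : ℝ) ≤ u + 1)
  rw [add_sub_cancel, div_rpow hx hb.le, le_div_iff₀ hbu] at hber
  have hexpand : (1 + (u + 1) * (x / b - 1)) * b ^ (u + 1)
      = b ^ (u + 1) - (u + 1) * b ^ u * (b - x) := by
    rw [rpow_add_one hb.ne' u]
    field_simp
    ring
  linarith

lemma sub_rpow_div_le_sum_Icc {u : ℝ} (hu : 0 ≤ u) {τ : ℕ → ℝ}
    (hτ : ∀ p : ℕ, ((p : ℝ) + 1) ^ u ≤ τ p) {s k : ℕ} (hsk : s ≤ k) :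
    (((k : ℝ) + 1) ^ (u + 1) - (s : ℝ) ^ (u + 1)) / (u + 1) ≤ ∑ p ∈ Icc s k, τ p := by
  have hstep (p : ℕ) : ((p : ℝ) + 1) ^ (u + 1) - (p : ℝ) ^ (u + 1) ≤ (u + 1) * τ p := by
    have h := rpow_add_one_sub_rpow_add_one_le hu p.cast_nonneg (le_add_of_nonneg_right zero_le_one)
    nlinarith [hτ p]
  rw [div_le_iff₀ (by linarith)]
  induction k, hsk using Nat.le_induction with
  | base => simpa [mul_comm] using hstep s
  | succ n hsn ih =>
    rw [sum_Icc_succ_top (by omega), add_mul]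
    have := hstep (n + 1)
    push_cast at this ⊢
    linarith

lemma sum_Icc_one_le_integral_add {f : ℝ → ℝ} {k : ℕ} (hf : MonotoneOn f (Set.Icc 0 k))
    (hf0 : 0 ≤ f 0) : ∑ s ∈ Icc 1 k, f s ≤ (∫ x in (0 : ℝ)..k, f x) + f k := by
  calc ∑ s ∈ Icc 1 k, f s ≤ ∑ s ∈ range (k + 1), f s := by
        refine sum_le_sum_of_subset_of_nonneg (fun s hs => ?_) fun s hs' hs => ?_
        · simp only [mem_Icc, mem_range] at hs ⊢
          omega
        · obtain rfl : s = 0 := by simp only [mem_Icc, mem_range, not_and_or] at hs hs'; omega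
          simpa using hf0
    _ ≤ (∫ x in (0 : ℝ)..k, f x) + f k := by
        rw [sum_range_succ, range_eq_Ico]
        gcongr
        simpa using MonotoneOn.sum_le_integral_Ico (f := f) (Nat.zero_le k) (by simpa using hf)

lemma hasDerivAt_exp_mul_rpow_div {u c t : ℝ} (hc : c ≠ 0) (ht : 0 < t) :
    HasDerivAt (fun x => exp (c * x ^ (u + 1)) / (c * x ^ u))
      (exp (c * t ^ (u + 1)) * (u + 1 - u / (c * t ^ (u + 1)))) t := by
  have hnum : HasDerivAt (fun x => exp (c * x ^ (u + 1)))
      (exp (c * t ^ (u + 1)) * (c * ((u + 1) * t ^ u))) t := by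
    simpa using ((hasDerivAt_rpow_const (p := u + 1) (Or.inl ht.ne')).const_mul c).exp
  have hden := (hasDerivAt_rpow_const (p := u) (Or.inl ht.ne')).const_mul c
  refine (hnum.div hden (mul_ne_zero hc (rpow_pos_of_pos ht u).ne')).congr_deriv ?_
  have htu := (rpow_pos_of_pos ht u).ne'
  rw [rpow_add_one ht.ne', rpow_sub_one ht.ne']
  field_simp

lemma continuous_exp_mul_rpow {u : ℝ} (hu : 0 ≤ u) (c : ℝ) :
    Continuous fun x : ℝ => exp (c * x ^ (u + 1)) :=
  continuous_exp.comp <| continuous_const.mul <|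
    continuous_id.rpow_const fun _ => Or.inr (by linarith)

lemma integral_exp_mul_rpow_le_div {u c a b : ℝ} (hu : 0 ≤ u) (ha : 0 < a) (hab : a ≤ b)
    (hca : 1 ≤ c * a ^ (u + 1)) :
    ∫ x in a..b, exp (c * x ^ (u + 1)) ≤ exp (c * b ^ (u + 1)) / (c * b ^ u) := by
  have hc : 0 < c := pos_of_mul_pos_left (by linarith) (rpow_pos_of_pos ha _).le
  have hderiv (t : ℝ) (ht : a ≤ t) :=
    hasDerivAt_exp_mul_rpow_div (u := u) hc.ne' (ha.trans_le ht)
  have hmain := intervalIntegral.integral_le_sub_of_hasDeriv_right_of_le hab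
    (fun t ht => (hderiv t ht.1).continuousAt.continuousWithinAt)
    (fun t ht => (hderiv t ht.1.le).hasDerivWithinAt)
    ((continuous_exp_mul_rpow hu c).integrableOn_Icc)
    (fun t ht => by
      have hct : 1 ≤ c * t ^ (u + 1) :=
        hca.trans (by gcongr; linarith [ht.1])
      have : u / (c * t ^ (u + 1)) ≤ u := div_le_self hu hct
      exact le_mul_of_one_le_right (exp_pos _).le (by linarith))
  have : 0 ≤ exp (c * a ^ (u + 1)) / (c * a ^ u) := by positivity
  linarith

lemma integral_zero_exp_mul_rpow_le {u c b : ℝ} (hu : 0 ≤ u) (hc : 0 < c) (hb : 0 ≤ b) :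
    ∫ x in (0 : ℝ)..b, exp (c * x ^ (u + 1)) ≤
      exp 1 * c ^ (-(1 / (u + 1))) + exp (c * b ^ (u + 1)) / (c * b ^ u) := by
  set a := c ^ (-(1 / (u + 1)))
  have ha : 0 < a := rpow_pos_of_pos hc _
  have hca : c * a ^ (u + 1) = 1 := by
    rw [← rpow_mul hc.le, show -(1 / (u + 1)) * (u + 1) = -1 by field_simp, rpow_neg_one,
      mul_inv_cancel₀ hc.ne']
  have hinit (y : ℝ) (hy : y ∈ Set.Icc 0 a) :
      ∫ x in (0 : ℝ)..y, exp (c * x ^ (u + 1)) ≤ exp 1 * a := by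
    have hle := intervalIntegral.integral_mono_on hy.1
      ((continuous_exp_mul_rpow hu c).intervalIntegrable (μ := MeasureTheory.volume) 0 y)
      intervalIntegrable_const
      fun x hx => exp_le_exp.2 <| (mul_le_mul_of_nonneg_left
        (rpow_le_rpow hx.1 (hx.2.trans hy.2) (by linarith)) hc.le).trans hca.le
    rw [intervalIntegral.integral_const, smul_eq_mul, sub_zero] at hle
    nlinarith [exp_pos 1, hy.2]
  have htail : 0 ≤ exp (c * b ^ (u + 1)) / (c * b ^ u) := by positivity
  rcases le_total b a with hba | hab
  · linarith [hinit b ⟨hb, hba⟩]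
  · rw [← intervalIntegral.integral_add_adjacent_intervals
      ((continuous_exp_mul_rpow hu c).intervalIntegrable 0 a)
      ((continuous_exp_mul_rpow hu c).intervalIntegrable a b)]
    gcongr
    · exact hinit a ⟨ha.le, le_rfl⟩
    · exact integral_exp_mul_rpow_le_div hu ha hab hca.ge

lemma sum_Icc_exp_mul_rpow_le {u c : ℝ} (hu : 0 ≤ u) (hc : 0 < c) (k : ℕ) :
    ∑ s ∈ Icc 1 k, exp (c * (s : ℝ) ^ (u + 1)) ≤
      exp 1 * c ^ (-(1 / (u + 1))) +
        exp (c * (k : ℝ) ^ (u + 1)) * (1 + 1 / (c * (k : ℝ) ^ u)) := by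
  have hmono : MonotoneOn (fun x : ℝ => exp (c * x ^ (u + 1))) (Set.Icc 0 k) :=
    fun x hx y _ hxy => exp_le_exp.2 (by gcongr; exact hx.1)
  calc ∑ s ∈ Icc 1 k, exp (c * (s : ℝ) ^ (u + 1))
      ≤ (∫ x in (0 : ℝ)..k, exp (c * x ^ (u + 1))) + exp (c * (k : ℝ) ^ (u + 1)) :=
        sum_Icc_one_le_integral_add hmono (exp_pos _).le
    _ ≤ exp 1 * c ^ (-(1 / (u + 1))) + exp (c * (k : ℝ) ^ (u + 1)) / (c * (k : ℝ) ^ u)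
          + exp (c * (k : ℝ) ^ (u + 1)) := by
        gcongr
        exact integral_zero_exp_mul_rpow_le hu hc k.cast_nonneg
    _ = _ := by ring

lemma rpow_div_eq_exp_neg {β : ℝ} (hβ : 0 < β) (d x : ℝ) :
    β ^ (x / d) = exp (-(log (1 / β) / d * x)) := by
  rw [rpow_def_of_pos hβ, one_div, log_inv]
  congr 1
  ring

lemma pow_sum_Icc_le_rpow {β u : ℝ} (hβ0 : 0 < β) (hβ1 : β ≤ 1) (hu : 0 ≤ u)
    {τ : ℕ → ℕ} (hτ : ∀ p : ℕ, ((p : ℝ) + 1) ^ u ≤ τ p) {s k : ℕ} (hsk : s ≤ k) :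
    β ^ (∑ p ∈ Icc s k, τ p) ≤
      β ^ ((((k : ℝ) + 1) ^ (u + 1) - (s : ℝ) ^ (u + 1)) / (u + 1)) := by
  rw [← rpow_natCast]
  refine rpow_le_rpow_of_exponent_ge hβ0 hβ1 ?_
  push_cast
  exact sub_rpow_div_le_sum_Icc hu hτ hsk

theorem stmt_12_general (β u : ℝ) (hβ0 : 0 < β) (hβ1 : β < 1) (hu0 : 0 < u)
    (τ : ℕ → ℕ) (hτ : ∀ p, τ p = ⌈((p : ℝ) + 1) ^ u⌉₊) :
    ∀ k : ℕ, 1 ≤ k →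
      ∑ s ∈ Finset.Icc 1 k, β ^ (∑ p ∈ Finset.Icc s k, τ p) ≤
        Real.exp 1 * (Real.log (β ^ (-(1 / (u + 1))))) ^ (-(1 / (u + 1))) *
            β ^ (((k : ℝ) + 1) ^ (u + 1) / (u + 1)) +
          β ^ ((((k : ℝ) + 1) ^ (u + 1) - (k : ℝ) ^ (u + 1)) / (u + 1)) *
            (1 + (u + 1) / ((k : ℝ) ^ u * Real.log (1 / β))) := by
  intro k _
  have hβ := rpow_div_eq_exp_neg hβ0 (u + 1)
  set c := log (1 / β) / (u + 1) with hc_def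
  have hc : 0 < c := div_pos (log_pos (one_lt_one_div hβ0 hβ1)) (by linarith)
  have hlog : log (β ^ (-(1 / (u + 1)))) = c := by
    rw [log_rpow hβ0, hc_def, one_div β, log_inv]
    ring
  have hratio : (u + 1) / ((k : ℝ) ^ u * log (1 / β)) = 1 / (c * (k : ℝ) ^ u) := by
    rw [hc_def, div_mul_eq_mul_div, one_div_div, mul_comm]
  calc ∑ s ∈ Icc 1 k, β ^ (∑ p ∈ Icc s k, τ p)
      ≤ ∑ s ∈ Icc 1 k, β ^ ((((k : ℝ) + 1) ^ (u + 1) - (s : ℝ) ^ (u + 1)) / (u + 1)) :=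
        sum_le_sum fun s hs => pow_sum_Icc_le_rpow hβ0 hβ1.le hu0.le
          (fun p => (hτ p).symm ▸ Nat.le_ceil _) (mem_Icc.1 hs).2
    _ = (∑ s ∈ Icc 1 k, exp (c * (s : ℝ) ^ (u + 1))) *
          exp (-(c * ((k : ℝ) + 1) ^ (u + 1))) := by
        rw [sum_mul]
        refine sum_congr rfl fun s _ => ?_
        rw [hβ, ← exp_add]
        congr 1
        ring
    _ ≤ (exp 1 * c ^ (-(1 / (u + 1))) +
            exp (c * (k : ℝ) ^ (u + 1)) * (1 + 1 / (c * (k : ℝ) ^ u))) *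
          exp (-(c * ((k : ℝ) + 1) ^ (u + 1))) := by
        gcongr
        exact sum_Icc_exp_mul_rpow_le hu0.le hc k
    _ = _ := by
        rw [hlog, hβ, hβ, hratio, mul_sub, neg_sub, sub_eq_add_neg, exp_add]
        ring

theorem stmt_12 (β u : ℝ) (hβ0 : 0 < β) (hβ1 : β < 1) (hu0 : 0 < u) (hu1 : u ≤ 1)
    (τ : ℕ → ℕ) (hτ : ∀ p, τ p = ⌈((p : ℝ) + 1) ^ u⌉₊) :
    ∀ k : ℕ, 1 ≤ k →
      ∑ s ∈ Finset.Icc 1 k, β ^ (∑ p ∈ Finset.Icc s k, τ p) ≤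
        Real.exp 1 * (Real.log (β ^ (-(1 / (u + 1))))) ^ (-(1 / (u + 1))) *
            β ^ (((k : ℝ) + 1) ^ (u + 1) / (u + 1)) +
          β ^ ((((k : ℝ) + 1) ^ (u + 1) - (k : ℝ) ^ (u + 1)) / (u + 1)) *
            (1 + (u + 1) / ((k : ℝ) ^ u * Real.log (1 / β))) :=
  stmt_12_general β u hβ0 hβ1 hu0 τ hτ
end

section
/- Let $q \in (0,1)$ and $v > 0$, and set $m_0 = \lceil 2v/\ln(1/q) \rceil$. Then $\int_{m_0}^{k+1} \frac{q^{-t}}{t^v} \, dt \le \frac{2 q^{-(k+1)} (k+1)^{-v}}{\ln(1/q)}$ for every integer $k+1 \ge m_0$. -/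
/-!
Write `q ^ (-t) / t ^ v = exp φ(t)` with `φ t = t log (1/q) - v log t`. For `t ≥ 2v / log (1/q)`
we have `φ' t = log (1/q) - v / t ≥ log (1/q) / 2`, so the integrand is at most
`(2 / log (1/q)) (exp ∘ φ)'`, and integrating this derivative gives the bound.
-/

open Real Set intervalIntegral

theorem integral_exp_le_of_le_deriv {φ φ' : ℝ → ℝ} {a b m : ℝ} (hab : a ≤ b) (hm : 0 < m)
    (hφ : ∀ t ∈ Icc a b, HasDerivAt φ (φ' t) t) (hmφ' : ∀ t ∈ Icc a b, m ≤ φ' t) :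
    ∫ t in a..b, exp (φ t) ≤ exp (φ b) / m := by
  have hcont : ContinuousOn (fun t => exp (φ t)) (Icc a b) :=
    continuous_exp.comp_continuousOn fun t ht => (hφ t ht).continuousAt.continuousWithinAt
  have hexp_le : ∀ t ∈ Ioo a b, exp (φ t) ≤ exp (φ t) * φ' t / m := fun t ht => by
    rw [le_div_iff₀ hm]
    exact mul_le_mul_of_nonneg_left (hmφ' t (Ioo_subset_Icc_self ht)) (exp_pos _).le
  calc ∫ t in a..b, exp (φ t)
      ≤ exp (φ b) / m - exp (φ a) / m :=
        integral_le_sub_of_hasDeriv_right_of_le hab (hcont.div_const m)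
          (fun t ht => ((hφ t (Ioo_subset_Icc_self ht)).exp.div_const m).hasDerivWithinAt)
          (hcont.integrableOn_Icc) hexp_le
    _ ≤ exp (φ b) / m := sub_le_self _ (by positivity)

theorem integral_exp_mul_sub_mul_log_le {c v a b : ℝ} (hc : 0 < c) (ha : 0 < a) (hab : a ≤ b)
    (hva : 2 * v ≤ c * a) :
    ∫ t in a..b, exp (c * t - v * log t) ≤ 2 * exp (c * b - v * log b) / c := by
  refine (integral_exp_le_of_le_deriv hab (half_pos hc) (φ' := fun t => c - v / t)
    (fun t ht => ?_) (fun t ht => ?_)).trans_eq (by ring)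
  · have ht : t ≠ 0 := (ha.trans_le ht.1).ne'
    exact (((hasDerivAt_id' t).const_mul c).sub ((hasDerivAt_log ht).const_mul v)).congr_deriv
      (by ring)
  · have ht0 : 0 < t := ha.trans_le ht.1
    have : 2 * v ≤ c * t := hva.trans (by gcongr; exact ht.1)
    rw [le_sub_comm, div_le_iff₀ ht0]
    linarith

theorem rpow_neg_div_rpow_eq_exp {q t : ℝ} (v : ℝ) (hq : 0 < q) (ht : 0 < t) :
    q ^ (-t) / t ^ v = exp (log (1 / q) * t - v * log t) := by
  rw [rpow_def_of_pos hq, rpow_def_of_pos ht, ← exp_sub, one_div, log_inv]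
  ring_nf

theorem stmt_16 (q v : ℝ) (hq0 : 0 < q) (hq1 : q < 1) (hv : 0 < v)
    (k : ℕ) (hk : (⌈2 * v / Real.log (1 / q)⌉₊ : ℝ) ≤ (k : ℝ) + 1) :
    ∫ t in (⌈2 * v / Real.log (1 / q)⌉₊ : ℝ)..((k : ℝ) + 1),
        q ^ (-t) / t ^ v ≤
      2 * q ^ (-((k : ℝ) + 1)) * ((k : ℝ) + 1) ^ (-v) / Real.log (1 / q) := by
  set L := log (1 / q)
  set a : ℝ := ↑⌈2 * v / L⌉₊
  have hL : 0 < L := log_pos (one_lt_one_div hq0 hq1)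
  have ha : 0 < a := by
    simpa [a] using Nat.one_le_ceil_iff.mpr (by positivity : 0 < 2 * v / L)
  have hva : 2 * v ≤ L * a := by
    rw [← div_le_iff₀' hL]; exact Nat.le_ceil _
  have hb : (0 : ℝ) < k + 1 := by positivity
  rw [rpow_neg hb.le, mul_assoc, ← div_eq_mul_inv, rpow_neg_div_rpow_eq_exp v hq0 hb,
    integral_congr fun t ht => rpow_neg_div_rpow_eq_exp v hq0
      (ha.trans_le (by rw [uIcc_of_le hk] at ht; exact ht.1))]
  exact integral_exp_mul_sub_mul_log_le hL ha hk hva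
end

section
/- Let $b > 1$, $u \in (0,1)$, and let $k_0 = \lfloor (\ln b)^{-1/(u+1)} \rfloor$. Then for every integer $k > k_0$, $\int_{(k_0+1)^{u+1}}^{k^{u+1}} \frac{b^t}{t^{u/(u+1)}}\,dt \le \frac{(u+1)\, b^{k^{u+1}}}{k^u \ln b}$. -/
/-! For `F t = b ^ t / t ^ q` one has `F' t = F t * (log b - q / t)`, and once `t ≥ 1 / log b`
this is at least `(1 - q) * log b * F t`. Hence `∫ t in a..c, F t ≤ F c / ((1 - q) * log b)` by comparison with
the antiderivative. For `q = u / (u + 1)` the factor `1 / (1 - q)` is `u + 1`, and `k₀` is chosen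
exactly so that `(k₀ + 1) ^ (u + 1) ≥ 1 / log b`. -/

open Real Set

theorem hasDerivAt_rpow_div_rpow {b q t : ℝ} (hb : 0 < b) (ht : 0 < t) :
    HasDerivAt (fun s => b ^ s / s ^ q) (b ^ t / t ^ q * (log b - q / t)) t := by
  have htq : t ^ q ≠ 0 := (rpow_pos_of_pos ht q).ne'
  refine ((hasStrictDerivAt_const_rpow hb t).hasDerivAt.div
    (hasDerivAt_rpow_const (p := q) (Or.inl ht.ne')) htq).congr_deriv ?_
  rw [rpow_sub_one ht.ne']
  field_simp

theorem integral_rpow_div_rpow_le {b q a c : ℝ} (hb : 1 < b) (hq0 : 0 ≤ q) (hq1 : q < 1)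
    (ha : (log b)⁻¹ ≤ a) (hac : a ≤ c) :
    ∫ t in a..c, b ^ t / t ^ q ≤ b ^ c / (c ^ q * ((1 - q) * log b)) := by
  have hL : 0 < log b := log_pos hb
  have hK : 0 < (1 - q) * log b := mul_pos (by linarith) hL
  have hpos : ∀ t ∈ Icc a c, 0 < t := fun t ht => (inv_pos.2 hL).trans_le (ha.trans ht.1)
  have hderiv : ∀ t ∈ Icc a c, HasDerivAt (fun s => b ^ s / s ^ q)
      (b ^ t / t ^ q * (log b - q / t)) t :=
    fun t ht => hasDerivAt_rpow_div_rpow (by linarith) (hpos t ht)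
  have hcont : ContinuousOn (fun s => b ^ s / s ^ q) (Icc a c) :=
    fun t ht => (hderiv t ht).continuousAt.continuousWithinAt
  have hbound : ∀ t ∈ Ioo a c,
      b ^ t / t ^ q ≤ b ^ t / t ^ q * (log b - q / t) / ((1 - q) * log b) := by
    intro t ht
    have ht0 := hpos t (Ioo_subset_Icc_self ht)
    have hinv : t⁻¹ ≤ log b := inv_le_of_inv_le₀ hL (ha.trans ht.1.le)
    have hfac : (1 - q) * log b ≤ log b - q / t := by
      rw [div_eq_mul_inv]; nlinarith
    rw [le_div_iff₀ hK]
    exact mul_le_mul_of_nonneg_left hfac (by positivity)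
  calc ∫ t in a..c, b ^ t / t ^ q
      ≤ b ^ c / c ^ q / ((1 - q) * log b) - b ^ a / a ^ q / ((1 - q) * log b) :=
        intervalIntegral.integral_le_sub_of_hasDeriv_right_of_le hac
          (hcont.div_const _)
          (fun t ht => ((hderiv t (Ioo_subset_Icc_self ht)).div_const _).hasDerivWithinAt)
          hcont.integrableOn_Icc hbound
    _ ≤ b ^ c / (c ^ q * ((1 - q) * log b)) := by
        have : 0 ≤ b ^ a / a ^ q / ((1 - q) * log b) := by
          have := hpos a ⟨le_rfl, hac⟩
          positivity
        rw [div_div]; linarith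

theorem inv_le_floor_rpow_neg_inv_add_one_rpow {x p : ℝ} (hx : 0 < x) (hp : 0 < p) :
    x⁻¹ ≤ ((⌊x ^ (-(1 / p))⌋₊ : ℝ) + 1) ^ p := by
  calc x⁻¹ = (x ^ (-(1 / p))) ^ p := by
        rw [← rpow_mul hx.le, neg_mul, one_div_mul_cancel hp.ne', rpow_neg_one]
    _ ≤ ((⌊x ^ (-(1 / p))⌋₊ : ℝ) + 1) ^ p :=
        rpow_le_rpow (by positivity) (Nat.lt_floor_add_one _).le hp.le

theorem stmt_19_general (b u : ℝ) (hb : 1 < b) (hu0 : 0 < u)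
    (k : ℕ) (hk : ⌊(Real.log b) ^ (-(1 / (u + 1)))⌋₊ < k) :
    ∫ t in (((⌊(Real.log b) ^ (-(1 / (u + 1)))⌋₊ : ℝ) + 1) ^ (u + 1))..((k : ℝ) ^ (u + 1)),
        b ^ t / t ^ (u / (u + 1)) ≤
      (u + 1) * b ^ ((k : ℝ) ^ (u + 1)) / ((k : ℝ) ^ u * Real.log b) := by
  have hu1 : 0 < u + 1 := by linarith
  have hk0 : (0 : ℝ) ≤ k := k.cast_nonneg
  have hq1 : u / (u + 1) < 1 := (div_lt_one hu1).2 (by linarith)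
  have hac : ((⌊(log b) ^ (-(1 / (u + 1)))⌋₊ : ℝ) + 1) ^ (u + 1) ≤ (k : ℝ) ^ (u + 1) :=
    rpow_le_rpow (by positivity) (by exact_mod_cast hk) hu1.le
  have hck : ((k : ℝ) ^ (u + 1)) ^ (u / (u + 1)) = (k : ℝ) ^ u := by
    rw [← rpow_mul hk0, mul_div_cancel₀ _ hu1.ne']
  have hq : 1 - u / (u + 1) = (u + 1)⁻¹ := by field_simp; ring
  calc _ ≤ b ^ ((k : ℝ) ^ (u + 1)) /
        (((k : ℝ) ^ (u + 1)) ^ (u / (u + 1)) * ((1 - u / (u + 1)) * log b)) :=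
        integral_rpow_div_rpow_le hb (by positivity) hq1
          (inv_le_floor_rpow_neg_inv_add_one_rpow (log_pos hb) hu1) hac
    _ = _ := by
        rw [hck, hq]
        field_simp

theorem stmt_19 (b u : ℝ) (hb : 1 < b) (hu0 : 0 < u) (hu1 : u < 1)
    (k : ℕ) (hk : ⌊(Real.log b) ^ (-(1 / (u + 1)))⌋₊ < k) :
    ∫ t in (((⌊(Real.log b) ^ (-(1 / (u + 1)))⌋₊ : ℝ) + 1) ^ (u + 1))..((k : ℝ) ^ (u + 1)),
        b ^ t / t ^ (u / (u + 1)) ≤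
      (u + 1) * b ^ ((k : ℝ) ^ (u + 1)) / ((k : ℝ) ^ u * Real.log b) :=
  stmt_19_general b u hb hu0 k hk
end
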